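/- arXiv:2412.19230 — 2 statements merged into one kernel-verified Lean document; each statement's English description precedes it below -/
import Mathlib

section
/- In every semistrong edge coloring of the graph C_Δ ∨ I_2 (Δ ≥ 4), no edge of the cycle C_Δ receives the same color as any edge joining the cycle to I_2. Consequently χ'_ss(C_Δ ∨ I_2) = 2Δ + χ'_ss(C_Δ). -/
namespace SSE

open SimpleGraph

variable {V : Type*} {W : Type*}

/-- The set of vertices covered by a set of edges. -/
def cov (M : Set (Sym2 V)) : Set V := {v | ∃ e ∈ M, v ∈ e}

/-- `M` is a matching of `G`: a set of pairwise disjoint edges of `G`. -/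
def IsMatchingSet (G : SimpleGraph V) (M : Set (Sym2 V)) : Prop :=
  M ⊆ G.edgeSet ∧ ∀ e ∈ M, ∀ f ∈ M, e ≠ f → ∀ v : V, v ∈ e → v ∉ f

/-- `v` is a pendant vertex (degree 1) of the subgraph `G_M` of `G` induced by
the vertices covered by `M`. -/
def PendantIn (G : SimpleGraph V) (M : Set (Sym2 V)) (v : V) : Prop :=
  v ∈ cov M ∧ ∃! u, u ∈ cov M ∧ G.Adj v u

/-- `M` is an induced (strong) matching of `G`: every vertex of `G_M` is pendant in `G_M`. -/
def IsInducedMatching (G : SimpleGraph V) (M : Set (Sym2 V)) : Prop :=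
  IsMatchingSet G M ∧ ∀ v ∈ cov M, PendantIn G M v

/-- `M` is a semistrong matching of `G`: every edge of `M` is a pendant edge of `G_M`. -/
def IsSemistrongMatching (G : SimpleGraph V) (M : Set (Sym2 V)) : Prop :=
  IsMatchingSet G M ∧ ∀ e ∈ M, ∃ v, v ∈ e ∧ PendantIn G M v

/-- `N` is a perfect matching of the subgraph of `G` induced by `S`. -/
def IsPerfectMatchingOn (G : SimpleGraph V) (S : Set V) (N : Set (Sym2 V)) : Prop :=
  IsMatchingSet G N ∧ (∀ e ∈ N, ∀ v : V, v ∈ e → v ∈ S) ∧ cov N = S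

/-- `M` is a uniquely restricted matching of `G`: it is the unique perfect matching
of the subgraph induced by the vertices it covers. -/
def IsUniquelyRestrictedMatching (G : SimpleGraph V) (M : Set (Sym2 V)) : Prop :=
  IsMatchingSet G M ∧ ∀ N : Set (Sym2 V), IsPerfectMatchingOn G (cov M) N → N = M

/-- An edge coloring of `G` with colors `< k` each of whose color classes satisfies `P`. -/
def IsPColoring (G : SimpleGraph V) (P : SimpleGraph V → Set (Sym2 V) → Prop)
    (c : Sym2 V → ℕ) (k : ℕ) : Prop :=
  (∀ e ∈ G.edgeSet, c e < k) ∧ ∀ i : ℕ, P G {e | e ∈ G.edgeSet ∧ c e = i}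

/-- The least number of colors in an edge coloring of `G` whose color classes satisfy `P`. -/
noncomputable def pIndex (G : SimpleGraph V)
    (P : SimpleGraph V → Set (Sym2 V) → Prop) : ℕ :=
  sInf {k | ∃ c, IsPColoring G P c k}

/-- The chromatic index. -/
noncomputable def chromIndex (G : SimpleGraph V) : ℕ := pIndex G IsMatchingSet

/-- The uniquely restricted chromatic index. -/
noncomputable def urIndex (G : SimpleGraph V) : ℕ := pIndex G IsUniquelyRestrictedMatching

/-- The semistrong chromatic index. -/
noncomputable def ssIndex (G : SimpleGraph V) : ℕ := pIndex G IsSemistrongMatching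

/-- The strong chromatic index. -/
noncomputable def strongIndex (G : SimpleGraph V) : ℕ := pIndex G IsInducedMatching

/-- The degree of a vertex. -/
noncomputable def natDeg (G : SimpleGraph V) (v : V) : ℕ := (G.neighborSet v).ncard

/-- The maximum average degree of `G` is (strictly) less than `q`:
every nonempty (induced) subgraph has average degree `< q`. -/
def MadLT (G : SimpleGraph V) (q : ℚ) : Prop :=
  ∀ s : Set V, s.Finite → s.Nonempty →
    (2 * ({e ∈ G.edgeSet | ∀ v ∈ e, v ∈ s}.ncard : ℚ)) < q * s.ncard

/-- `K` is a minor of `G` (branch-set formulation). -/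
def HasMinor (G : SimpleGraph V) (K : SimpleGraph W) : Prop :=
  ∃ B : W → Set V, (∀ w, (B w).Nonempty) ∧
    (∀ w, (G.induce (B w)).Connected) ∧
    (Pairwise fun w w' => Disjoint (B w) (B w')) ∧
    (∀ w w', K.Adj w w' → ∃ u ∈ B w, ∃ v ∈ B w', G.Adj u v)

/-- `G` is planar (by Wagner's theorem: no `K₅` minor and no `K₃,₃` minor). -/
def IsPlanar (G : SimpleGraph V) : Prop :=
  ¬ HasMinor G (completeGraph (Fin 5)) ∧
  ¬ HasMinor G (completeBipartiteGraph (Fin 3) (Fin 3))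

/-- The join `C_Δ ∨ I_2` of a cycle on `Δ` vertices with an independent set of 2 vertices. -/
def joinCI (n : ℕ) : SimpleGraph (Fin n ⊕ Fin 2) :=
  SimpleGraph.fromRel (fun x y =>
    match x, y with
    | Sum.inl a, Sum.inl b => (SimpleGraph.cycleGraph n).Adj a b
    | Sum.inl _, Sum.inr _ => True
    | _, _ => False)

/-- `G` contains an `M`-alternating cycle: a cycle whose edges alternate between
edges in `M` and edges not in `M` (cyclically). -/
def HasAlternatingCycle (G : SimpleGraph V) (M : Set (Sym2 V)) : Prop :=
  ∃ (v : V) (c : G.Walk v v), c.IsCycle ∧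
    List.Chain' (fun e f => ¬(e ∈ M ↔ f ∈ M)) c.edges ∧
    ∀ e ∈ c.edges.head?, ∀ f ∈ c.edges.getLast?, ¬(e ∈ M ↔ f ∈ M)

/-- Edges `e` and `f` lie together on a cycle of length 4 in `G`. -/
def OnCommonC4 (G : SimpleGraph V) (e f : Sym2 V) : Prop :=
  ∃ (v : V) (c : G.Walk v v), c.IsCycle ∧ c.length = 4 ∧ e ∈ c.edges ∧ f ∈ c.edges


lemma adj_inl_inl {n : ℕ} {a b : Fin n} :
    (joinCI n).Adj (Sum.inl a) (Sum.inl b) ↔ (SimpleGraph.cycleGraph n).Adj a b := by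
  constructor
  · rintro ⟨-, h | h⟩
    · exact h
    · exact h.symm
  · intro h
    exact ⟨by simpa using h.ne, Or.inl h⟩

lemma adj_inl_inr {n : ℕ} (a : Fin n) (b : Fin 2) :
    (joinCI n).Adj (Sum.inl a) (Sum.inr b) :=
  ⟨by simp, Or.inl trivial⟩

lemma not_adj_inr_inr {n : ℕ} (a b : Fin 2) :
    ¬ (joinCI n).Adj (Sum.inr a) (Sum.inr b) := by
  rintro ⟨-, h | h⟩ <;> exact h

lemma edge_cases {n : ℕ} {e : Sym2 (Fin n ⊕ Fin 2)} (he : e ∈ (joinCI n).edgeSet) :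
    (∃ a b : Fin n, e = s(Sum.inl a, Sum.inl b)) ∨
    (∃ (a : Fin n) (b : Fin 2), e = s(Sum.inl a, Sum.inr b)) := by
  induction e with
  | _ x y =>
    rcases x with a | a <;> rcases y with b | b
    · exact Or.inl ⟨a, b, rfl⟩
    · exact Or.inr ⟨a, b, rfl⟩
    · exact Or.inr ⟨b, a, Sym2.eq_swap⟩
    · exact absurd he (not_adj_inr_inr a b)

lemma semistrong_no_mix {n : ℕ} {M : Set (Sym2 (Fin n ⊕ Fin 2))}
    (hM : IsSemistrongMatching (joinCI n) M)
    {a b : Fin n} (he : s(Sum.inl a, Sum.inl b) ∈ M)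
    {f : Sym2 (Fin n ⊕ Fin 2)} (hf : f ∈ M) {y : Fin 2}
    (hy : (Sum.inr y : Fin n ⊕ Fin 2) ∈ f) : False := by
  obtain ⟨hmatch, hpend⟩ := hM
  have hadj : (joinCI n).Adj (Sum.inl a) (Sum.inl b) := hmatch.1 he
  obtain ⟨v, hv, -, ⟨u, hu, huniq⟩⟩ := hpend _ he
  have hyc : (Sum.inr y : Fin n ⊕ Fin 2) ∈ cov M := ⟨f, hf, hy⟩
  rcases Sym2.mem_iff.mp hv with rfl | rfl
  · have h1 : (Sum.inl b : Fin n ⊕ Fin 2) ∈ cov M ∧ (joinCI n).Adj (Sum.inl a) (Sum.inl b) :=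
      ⟨⟨_, he, Sym2.mem_mk_right _ _⟩, hadj⟩
    have h2 : (Sum.inr y : Fin n ⊕ Fin 2) ∈ cov M ∧ (joinCI n).Adj (Sum.inl a) (Sum.inr y) :=
      ⟨hyc, adj_inl_inr a y⟩
    have := (huniq _ h1).trans (huniq _ h2).symm
    exact absurd this (by simp)
  · have h1 : (Sum.inl a : Fin n ⊕ Fin 2) ∈ cov M ∧ (joinCI n).Adj (Sum.inl b) (Sum.inl a) :=
      ⟨⟨_, he, Sym2.mem_mk_left _ _⟩, hadj.symm⟩
    have h2 : (Sum.inr y : Fin n ⊕ Fin 2) ∈ cov M ∧ (joinCI n).Adj (Sum.inl b) (Sum.inr y) :=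
      ⟨hyc, adj_inl_inr b y⟩
    have := (huniq _ h1).trans (huniq _ h2).symm
    exact absurd this (by simp)

lemma semistrong_one_spoke {n : ℕ} {M : Set (Sym2 (Fin n ⊕ Fin 2))}
    (hM : IsSemistrongMatching (joinCI n) M)
    {a a' : Fin n} {b b' : Fin 2}
    (h1 : s(Sum.inl a, Sum.inr b) ∈ M) (h2 : s(Sum.inl a', Sum.inr b') ∈ M) :
    a = a' ∧ b = b' := by
  obtain ⟨hmatch, hpend⟩ := hM
  by_cases hbb : b = b'
  · subst hbb
    refine ⟨?_, rfl⟩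
    by_contra haa
    have hne : s(Sum.inl a, (Sum.inr b : Fin n ⊕ Fin 2)) ≠ s(Sum.inl a', Sum.inr b) := by
      simp [Sym2.eq_iff, haa]
    exact hmatch.2 _ h1 _ h2 hne _ (Sym2.mem_mk_right _ _) (Sym2.mem_mk_right _ _)
  · exfalso
    have hne : s(Sum.inl a, (Sum.inr b : Fin n ⊕ Fin 2)) ≠ s(Sum.inl a', Sum.inr b') := by
      simp [Sym2.eq_iff, hbb]
    have haa : a ≠ a' := by
      intro h; subst h
      exact hmatch.2 _ h1 _ h2 hne _ (Sym2.mem_mk_left _ _) (Sym2.mem_mk_left _ _)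
    obtain ⟨v, hv, -, ⟨u, hu, huniq⟩⟩ := hpend _ h1
    rcases Sym2.mem_iff.mp hv with rfl | rfl
    · have c1 := huniq _ ⟨⟨_, h1, Sym2.mem_mk_right _ _⟩, adj_inl_inr a b⟩
      have c2 := huniq _ ⟨⟨_, h2, Sym2.mem_mk_right _ _⟩, adj_inl_inr a b'⟩
      exact hbb (by simpa using (c1.trans c2.symm))
    · have c1 := huniq _ ⟨⟨_, h1, Sym2.mem_mk_left _ _⟩, (adj_inl_inr a b).symm⟩
      have c2 := huniq _ ⟨⟨_, h2, Sym2.mem_mk_left _ _⟩, (adj_inl_inr a' b).symm⟩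
      exact haa (by simpa using (c1.trans c2.symm))

lemma map_inl_injective {n : ℕ} :
    Function.Injective (Sym2.map (Sum.inl : Fin n → Fin n ⊕ Fin 2)) :=
  Sym2.map.injective Sum.inl_injective

lemma mem_map_inl {n : ℕ} {v : Fin n} {e : Sym2 (Fin n)} :
    (Sum.inl v : Fin n ⊕ Fin 2) ∈ Sym2.map (Sum.inl : Fin n → Fin n ⊕ Fin 2) e ↔ v ∈ e := by
  rw [Sym2.mem_map]
  constructor
  · rintro ⟨w, hw, h⟩; cases Sum.inl_injective h; exact hw
  · intro h; exact ⟨v, h, rfl⟩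

lemma cov_map_inl {n : ℕ} {M₀ : Set (Sym2 (Fin n))} {x : Fin n ⊕ Fin 2}
    (hx : x ∈ cov (Sym2.map (Sum.inl : Fin n → Fin n ⊕ Fin 2) '' M₀)) :
    ∃ v : Fin n, x = Sum.inl v ∧ v ∈ cov M₀ := by
  obtain ⟨e, ⟨e₀, he₀, rfl⟩, hxe⟩ := hx
  obtain ⟨w, hw, rfl⟩ := Sym2.mem_map.mp hxe
  exact ⟨w, rfl, ⟨e₀, he₀, hw⟩⟩

lemma pendant_map_inl {n : ℕ} {M₀ : Set (Sym2 (Fin n))} {v : Fin n} :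
    PendantIn (joinCI n) (Sym2.map (Sum.inl : Fin n → Fin n ⊕ Fin 2) '' M₀) (Sum.inl v) ↔
      PendantIn (SimpleGraph.cycleGraph n) M₀ v := by
  constructor
  · rintro ⟨hcov, u, ⟨hucov, huadj⟩, huniq⟩
    obtain ⟨w, rfl, hwcov⟩ := cov_map_inl hucov
    obtain ⟨v', hveq, hv'⟩ := cov_map_inl hcov
    cases Sum.inl_injective hveq
    refine ⟨hv', w, ⟨hwcov, adj_inl_inl.mp huadj⟩, ?_⟩
    intro w' ⟨hw'cov, hw'adj⟩
    have : (Sum.inl w' : Fin n ⊕ Fin 2) = Sum.inl w := by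
      apply huniq
      obtain ⟨e₀, he₀, hw'e₀⟩ := hw'cov
      exact ⟨⟨_, ⟨e₀, he₀, rfl⟩, mem_map_inl.mpr hw'e₀⟩, adj_inl_inl.mpr hw'adj⟩
    exact Sum.inl_injective this
  · rintro ⟨⟨e₀, he₀, hve₀⟩, u, ⟨hucov, huadj⟩, huniq⟩
    refine ⟨⟨_, ⟨e₀, he₀, rfl⟩, mem_map_inl.mpr hve₀⟩, Sum.inl u, ⟨?_, ?_⟩, ?_⟩
    · obtain ⟨f₀, hf₀, huf₀⟩ := hucov
      exact ⟨_, ⟨f₀, hf₀, rfl⟩, mem_map_inl.mpr huf₀⟩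
    · exact adj_inl_inl.mpr huadj
    · rintro x ⟨hxcov, hxadj⟩
      obtain ⟨w, rfl, hwcov⟩ := cov_map_inl hxcov
      exact congrArg Sum.inl (huniq w ⟨hwcov, adj_inl_inl.mp hxadj⟩)

lemma ss_map_iff {n : ℕ} (M₀ : Set (Sym2 (Fin n))) :
    IsSemistrongMatching (SimpleGraph.cycleGraph n) M₀ ↔
      IsSemistrongMatching (joinCI n) (Sym2.map (Sum.inl : Fin n → Fin n ⊕ Fin 2) '' M₀) := by
  constructor
  · rintro ⟨⟨hsub, hdisj⟩, hpend⟩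
    refine ⟨⟨?_, ?_⟩, ?_⟩
    · rintro e ⟨e₀, he₀, rfl⟩
      induction e₀ with
      | _ a b => exact adj_inl_inl.mpr (hsub he₀)
    · rintro e ⟨e₀, he₀, rfl⟩ f ⟨f₀, hf₀, rfl⟩ hef x hxe hxf
      have hef₀ : e₀ ≠ f₀ := fun h => hef (by rw [h])
      obtain ⟨w, hw, rfl⟩ := Sym2.mem_map.mp hxe
      exact hdisj _ he₀ _ hf₀ hef₀ w hw (mem_map_inl.mp hxf)
    · rintro e ⟨e₀, he₀, rfl⟩
      obtain ⟨v, hve₀, hvpend⟩ := hpend _ he₀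
      exact ⟨Sum.inl v, mem_map_inl.mpr hve₀, pendant_map_inl.mpr hvpend⟩
  · rintro ⟨⟨hsub, hdisj⟩, hpend⟩
    refine ⟨⟨?_, ?_⟩, ?_⟩
    · intro e₀ he₀
      induction e₀ with
      | _ a b => exact adj_inl_inl.mp (hsub ⟨_, he₀, rfl⟩)
    · intro e₀ he₀ f₀ hf₀ hef₀ v hv hvf
      exact hdisj _ ⟨e₀, he₀, rfl⟩ _ ⟨f₀, hf₀, rfl⟩
        (fun h => hef₀ (map_inl_injective h)) (Sum.inl v)
        (mem_map_inl.mpr hv) (mem_map_inl.mpr hvf)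
    · intro e₀ he₀
      obtain ⟨x, hxe, hxpend⟩ := hpend _ ⟨e₀, he₀, rfl⟩
      obtain ⟨w, hw, rfl⟩ := Sym2.mem_map.mp hxe
      exact ⟨w, hw, pendant_map_inl.mp hxpend⟩

lemma ss_of_subsingleton {G : SimpleGraph V} {M : Set (Sym2 V)}
    (hsub : M ⊆ G.edgeSet) (hss : ∀ e ∈ M, ∀ f ∈ M, e = f) :
    IsSemistrongMatching G M := by
  refine ⟨⟨hsub, fun e he f hf hef => absurd (hss e he f hf) hef⟩, ?_⟩
  intro e he
  induction e with
  | _ a b =>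
    have hadj : G.Adj a b := hsub he
    refine ⟨a, Sym2.mem_mk_left _ _, ⟨_, he, Sym2.mem_mk_left _ _⟩, b,
      ⟨⟨_, he, Sym2.mem_mk_right _ _⟩, hadj⟩, ?_⟩
    rintro u ⟨⟨f, hf, huf⟩, hu⟩
    rw [hss f hf _ he] at huf
    rcases Sym2.mem_iff.mp huf with rfl | rfl
    · exact absurd rfl hu.ne'
    · rfl

lemma cycle_coloring_exists (n : ℕ) :
    {k | ∃ c, IsPColoring (SimpleGraph.cycleGraph n) IsSemistrongMatching c k}.Nonempty := by
  classical
  refine ⟨Fintype.card (Sym2 (Fin n)), fun e => (Fintype.equivFin (Sym2 (Fin n)) e : ℕ), ?_, ?_⟩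
  · intro e _; exact (Fintype.equivFin (Sym2 (Fin n)) e).isLt
  · intro i
    refine ss_of_subsingleton (fun e he => he.1) ?_
    rintro e ⟨-, he⟩ f ⟨-, hf⟩
    exact (Fintype.equivFin (Sym2 (Fin n))).injective (Fin.val_injective (he.trans hf.symm))

/-- The coloring of the join built from a coloring `c₀` of the cycle. -/
def jcolor (n : ℕ) (c₀ : Sym2 (Fin n) → ℕ) : Sym2 (Fin n ⊕ Fin 2) → ℕ :=
  Sym2.lift ⟨fun x y =>
    match x, y with
    | Sum.inl a, Sum.inl b => 2 * n + c₀ s(a, b)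
    | Sum.inl a, Sum.inr b => 2 * (a : ℕ) + (b : ℕ)
    | Sum.inr b, Sum.inl a => 2 * (a : ℕ) + (b : ℕ)
    | Sum.inr _, Sum.inr _ => 0,
   by
     rintro (a | a) (b | b) <;> simp [Sym2.eq_swap]⟩

lemma jcolor_inl_inl {n : ℕ} (c₀ : Sym2 (Fin n) → ℕ) (a b : Fin n) :
    jcolor n c₀ s(Sum.inl a, Sum.inl b) = 2 * n + c₀ s(a, b) := rfl

lemma jcolor_inl_inr {n : ℕ} (c₀ : Sym2 (Fin n) → ℕ) (a : Fin n) (b : Fin 2) :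
    jcolor n c₀ s(Sum.inl a, Sum.inr b) = 2 * (a : ℕ) + (b : ℕ) := rfl

lemma jcolor_isPColoring {n : ℕ} {c₀ : Sym2 (Fin n) → ℕ} {k₀ : ℕ}
    (hc₀ : IsPColoring (SimpleGraph.cycleGraph n) IsSemistrongMatching c₀ k₀) :
    IsPColoring (joinCI n) IsSemistrongMatching (jcolor n c₀) (2 * n + k₀) := by
  constructor
  · intro e he
    rcases edge_cases he with ⟨a, b, rfl⟩ | ⟨a, b, rfl⟩
    · rw [jcolor_inl_inl]
      have : (SimpleGraph.cycleGraph n).Adj a b := adj_inl_inl.mp he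
      exact Nat.add_lt_add_left (hc₀.1 _ this) _
    · rw [jcolor_inl_inr]
      have ha := a.isLt
      have hb := b.isLt
      omega
  · intro i
    by_cases hi : i < 2 * n
    · refine ss_of_subsingleton (fun e he => he.1) ?_
      rintro e ⟨he, hce⟩ f ⟨hf, hcf⟩
      rcases edge_cases he with ⟨a, b, rfl⟩ | ⟨a, b, rfl⟩
      · rw [jcolor_inl_inl] at hce; omega
      rcases edge_cases hf with ⟨a', b', rfl⟩ | ⟨a', b', rfl⟩
      · rw [jcolor_inl_inl] at hcf; omega
      rw [jcolor_inl_inr] at hce hcf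
      have hb := b.isLt; have hb' := b'.isLt
      have : (a : ℕ) = (a' : ℕ) ∧ (b : ℕ) = (b' : ℕ) := by omega
      rw [Fin.val_injective this.1, Fin.val_injective this.2]
    · have hset : {e | e ∈ (joinCI n).edgeSet ∧ jcolor n c₀ e = i} =
          Sym2.map (Sum.inl : Fin n → Fin n ⊕ Fin 2) ''
            {e | e ∈ (SimpleGraph.cycleGraph n).edgeSet ∧ c₀ e = i - 2 * n} := by
        ext e
        constructor
        · rintro ⟨he, hce⟩
          rcases edge_cases he with ⟨a, b, rfl⟩ | ⟨a, b, rfl⟩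
          · rw [jcolor_inl_inl] at hce
            exact ⟨s(a, b), ⟨adj_inl_inl.mp he, by omega⟩, rfl⟩
          · rw [jcolor_inl_inr] at hce
            have hb := b.isLt; have ha := a.isLt
            omega
        · rintro ⟨e₀, ⟨he₀, hce₀⟩, rfl⟩
          induction e₀ with
          | _ a b =>
            simp only [Sym2.map_pair_eq]
            refine ⟨adj_inl_inl.mpr he₀, ?_⟩
            rw [jcolor_inl_inl, hce₀]
            have : 2 * n ≤ i := le_of_not_gt hi
            omega
      rw [hset]
      exact (ss_map_iff _).mp (hc₀.2 (i - 2 * n))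

lemma lower_aux {n : ℕ} {c : Sym2 (Fin n ⊕ Fin 2) → ℕ} {k : ℕ}
    (hbd : ∀ e ∈ (joinCI n).edgeSet, c e < k)
    (hcl : ∀ i : ℕ, IsSemistrongMatching (joinCI n) {e | e ∈ (joinCI n).edgeSet ∧ c e = i}) :
    2 * n ≤ k ∧ ∃ c', IsPColoring (SimpleGraph.cycleGraph n) IsSemistrongMatching c'
      (k - 2 * n) := by
  classical
  set g : Fin n × Fin 2 → ℕ := fun p => c s(Sum.inl p.1, Sum.inr p.2) with hg_def
  have hspoke_edge : ∀ p : Fin n × Fin 2,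
      s(Sum.inl p.1, (Sum.inr p.2 : Fin n ⊕ Fin 2)) ∈ (joinCI n).edgeSet :=
    fun p => adj_inl_inr p.1 p.2
  have hg_inj : Function.Injective g := by
    intro p p' h
    have h1 : s(Sum.inl p.1, (Sum.inr p.2 : Fin n ⊕ Fin 2)) ∈
        {e | e ∈ (joinCI n).edgeSet ∧ c e = g p} := ⟨hspoke_edge p, rfl⟩
    have h2 : s(Sum.inl p'.1, (Sum.inr p'.2 : Fin n ⊕ Fin 2)) ∈
        {e | e ∈ (joinCI n).edgeSet ∧ c e = g p} := ⟨hspoke_edge p', h.symm⟩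
    obtain ⟨ha, hb⟩ := semistrong_one_spoke (hcl (g p)) h1 h2
    exact Prod.ext ha hb
  set T : Finset ℕ := Finset.univ.image g with hT_def
  have hT_card : T.card = 2 * n := by
    rw [hT_def, Finset.card_image_of_injective _ hg_inj, Finset.card_univ,
      Fintype.card_prod, Fintype.card_fin, Fintype.card_fin]
    ring
  have hT_sub : T ⊆ Finset.range k := by
    intro t ht
    obtain ⟨p, -, rfl⟩ := Finset.mem_image.mp ht
    exact Finset.mem_range.mpr (hbd _ (hspoke_edge p))
  have hk : 2 * n ≤ k := by
    have := Finset.card_le_card hT_sub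
    rwa [hT_card, Finset.card_range] at this
  set U : Finset ℕ := Finset.range k \ T with hU_def
  have hU_card : U.card = k - 2 * n := by
    rw [hU_def, Finset.card_sdiff_of_subset hT_sub, Finset.card_range, hT_card]
  -- the color of any cycle edge lies in U
  have hcyc_mem : ∀ e₀ ∈ (SimpleGraph.cycleGraph n).edgeSet,
      c (Sym2.map Sum.inl e₀) ∈ U := by
    intro e₀ he₀
    induction e₀ with
    | _ a b =>
      simp only [Sym2.map_pair_eq]
      have hedge : s(Sum.inl a, (Sum.inl b : Fin n ⊕ Fin 2)) ∈ (joinCI n).edgeSet :=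
        adj_inl_inl.mpr he₀
      rw [hU_def, Finset.mem_sdiff]
      refine ⟨Finset.mem_range.mpr (hbd _ hedge), ?_⟩
      intro hmem
      obtain ⟨p, -, hp⟩ := Finset.mem_image.mp hmem
      exact semistrong_no_mix (hcl (c s(Sum.inl a, Sum.inl b)))
        (⟨hedge, rfl⟩ : _ ∈ {e | e ∈ (joinCI n).edgeSet ∧ c e = _})
        ⟨hspoke_edge p, hp⟩ (Sym2.mem_mk_right _ _)
  set iso := U.orderIsoOfFin hU_card with hiso_def
  set φ : ℕ → ℕ := fun i => if h : i ∈ U then (iso.symm ⟨i, h⟩ : Fin (k - 2 * n)) else 0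
    with hφ_def
  have hφ_lt : ∀ i ∈ U, φ i < k - 2 * n := by
    intro i hi
    simp only [hφ_def, dif_pos hi]
    exact (iso.symm ⟨i, hi⟩).isLt
  have hφ_inj : ∀ i ∈ U, ∀ j ∈ U, φ i = φ j → i = j := by
    intro i hi j hj h
    simp only [hφ_def, dif_pos hi, dif_pos hj] at h
    have := iso.symm.injective (Fin.val_injective h)
    exact Subtype.ext_iff.mp this
  refine ⟨hk, fun e₀ => φ (c (Sym2.map Sum.inl e₀)), ?_, ?_⟩
  · intro e₀ he₀
    exact hφ_lt _ (hcyc_mem _ he₀)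
  · intro j
    set S : Set (Sym2 (Fin n)) :=
      {e₀ | e₀ ∈ (SimpleGraph.cycleGraph n).edgeSet ∧ φ (c (Sym2.map Sum.inl e₀)) = j}
      with hS_def
    show IsSemistrongMatching _ S
    rcases Set.eq_empty_or_nonempty S with hS | ⟨e₁, he₁, hce₁⟩
    · rw [hS]
      exact ss_of_subsingleton (fun e he => absurd he (Set.notMem_empty e))
        (fun e he => absurd he (Set.notMem_empty e))
    · set i := c (Sym2.map Sum.inl e₁) with hi_def
      have hiU : i ∈ U := hcyc_mem _ he₁
      have hMS : Sym2.map (Sum.inl : Fin n → Fin n ⊕ Fin 2) '' S =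
          {e | e ∈ (joinCI n).edgeSet ∧ c e = i} := by
        ext e
        constructor
        · rintro ⟨e₀, ⟨he₀, hce₀⟩, rfl⟩
          have hedge : Sym2.map Sum.inl e₀ ∈ (joinCI n).edgeSet := by
            induction e₀ with
            | _ a b =>
              simp only [Sym2.map_pair_eq]
              exact adj_inl_inl.mpr he₀
          refine ⟨hedge, ?_⟩
          exact hφ_inj _ (hcyc_mem _ he₀) _ hiU (hce₀.trans hce₁.symm)
        · rintro ⟨he, hce⟩
          rcases edge_cases he with ⟨a, b, rfl⟩ | ⟨a, b, rfl⟩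
          · refine ⟨s(a, b), ⟨adj_inl_inl.mp he, ?_⟩, (Sym2.map_pair_eq _ _ _).symm⟩
            rw [Sym2.map_pair_eq, hce]; exact hce₁
          · exfalso
            have : c s(Sum.inl a, (Sum.inr b : Fin n ⊕ Fin 2)) ∈ T :=
              Finset.mem_image.mpr ⟨(a, b), Finset.mem_univ _, rfl⟩
            rw [hce] at this
            exact (Finset.mem_sdiff.mp hiU).2 this
      exact (ss_map_iff S).mpr (hMS ▸ hcl i)


/-- In every semistrong edge coloring of `C_Δ ∨ I_2` (`Δ ≥ 4`), no cycle edge gets the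
color of an edge joining the cycle to `I_2`; consequently
`χ'_ss(C_Δ ∨ I_2) = 2Δ + χ'_ss(C_Δ)`. -/
theorem joinCI_cycle_colors_disjoint (Δ : ℕ) (hΔ : 4 ≤ Δ) :
    (∀ c : Sym2 (Fin Δ ⊕ Fin 2) → ℕ,
      (∀ i : ℕ, IsSemistrongMatching (joinCI Δ) {e | e ∈ (joinCI Δ).edgeSet ∧ c e = i}) →
      ∀ e ∈ (joinCI Δ).edgeSet, ∀ f ∈ (joinCI Δ).edgeSet,
        (∃ a b : Fin Δ, e = s(Sum.inl a, Sum.inl b)) →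
        (∃ b : Fin 2, (Sum.inr b : Fin Δ ⊕ Fin 2) ∈ f) →
        c e ≠ c f) ∧
    ssIndex (joinCI Δ) = 2 * Δ + ssIndex (SimpleGraph.cycleGraph Δ) := by
  constructor
  · rintro c hc e he f hf ⟨a, b, rfl⟩ ⟨y, hy⟩ hcc
    exact semistrong_no_mix (hc (c s(Sum.inl a, Sum.inl b)))
      (⟨he, rfl⟩ : _ ∈ {e | e ∈ (joinCI Δ).edgeSet ∧ c e = _})
      ⟨hf, hcc.symm⟩ hy
  · have hk₀ : ssIndex (SimpleGraph.cycleGraph Δ) ∈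
        {k | ∃ c, IsPColoring (SimpleGraph.cycleGraph Δ) IsSemistrongMatching c k} :=
      Nat.sInf_mem (cycle_coloring_exists Δ)
    obtain ⟨c₀, hc₀⟩ := hk₀
    have hup_mem : (2 * Δ + ssIndex (SimpleGraph.cycleGraph Δ)) ∈
        {k | ∃ c, IsPColoring (joinCI Δ) IsSemistrongMatching c k} :=
      ⟨jcolor Δ c₀, jcolor_isPColoring hc₀⟩
    apply le_antisymm
    · exact Nat.sInf_le hup_mem
    · apply le_csInf ⟨_, hup_mem⟩
      rintro k ⟨c, hc⟩
      obtain ⟨hk, c', hc'⟩ := lower_aux hc.1 hc.2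
      have hle : ssIndex (SimpleGraph.cycleGraph Δ) ≤ k - 2 * Δ := Nat.sInf_le ⟨c', hc'⟩
      omega


end SSE
end

section
/- For Δ ≥ 5, the uniquely restricted chromatic index of C_Δ ∨ I_2 equals 2Δ, while χ'_ur(C_4 ∨ I_2) = 12 = 2·4 + 4. -/
namespace SSE

open SimpleGraph

variable {V : Type*} {W : Type*}

/-!
Uniquely restricted matchings are closed under taking subsets, so two edges of one can be
neither adjacent nor opposite sides of a `4`-cycle: swapping them for the other two sides
would give a second perfect matching of the same four vertices. Any two of the `2Δ` spokes of
`C_Δ ∨ I_2` meet or lie on a `4`-cycle through both apices, so they need distinct colours; for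
`Δ = 4` the same holds for all `12` edges. For `Δ ≥ 5` the rim edge `{j, j + 1}` can share the
colour of the spoke from one apex to `j + 3`: that vertex has no neighbour in `{j, j + 1}`, so
the spoke is a pendant edge of the pair and cannot be swapped out.
-/

section Matching

variable {G : SimpleGraph V} {M M' N : Set (Sym2 V)} {e f : Sym2 V} {p q v : V}

theorem mem_cov : v ∈ cov M ↔ ∃ e ∈ M, v ∈ e := Iff.rfl

theorem cov_mono (h : M' ⊆ M) : cov M' ⊆ cov M := fun _ ⟨e, he, hv⟩ => ⟨e, h he, hv⟩

@[simp] theorem cov_empty : cov (∅ : Set (Sym2 V)) = ∅ := by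
  ext; simp [cov]

@[simp] theorem cov_insert : cov (insert s(p, q) M) = insert p (insert q (cov M)) := by
  ext; simp [cov, or_assoc]

@[simp] theorem cov_singleton : cov {s(p, q)} = {p, q} := by
  ext; simp [cov]

theorem cov_union : cov (M ∪ M') = cov M ∪ cov M' := by
  ext; simp only [cov, Set.mem_union, Set.mem_ofPred_eq, or_and_right, exists_or]

theorem IsMatchingSet.mono (hM : IsMatchingSet G M) (h : M' ⊆ M) : IsMatchingSet G M' :=
  ⟨h.trans hM.1, fun e he f hf => hM.2 e (h he) f (h hf)⟩

theorem IsMatchingSet.eq_of_mem_of_mem (hM : IsMatchingSet G M) (he : e ∈ M) (hf : f ∈ M)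
    (hve : v ∈ e) (hvf : v ∈ f) : e = f :=
  by_contra fun hne => hM.2 e he f hf hne v hve hvf

theorem IsMatchingSet.ne_and_ne_of_mem_of_ne (hN : IsMatchingSet G N) (hpq : s(p, q) ∈ N)
    (he : e ∈ N) (hne : e ≠ s(p, q)) (hv : v ∈ e) : v ≠ p ∧ v ≠ q := by
  refine ⟨?_, ?_⟩ <;> rintro rfl <;> exact hne (hN.eq_of_mem_of_mem he hpq hv (by simp))

end Matching

section UniquelyRestricted

variable {G : SimpleGraph V} {M M' : Set (Sym2 V)} {e : Sym2 V} {p q r t : V}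

theorem isUniquelyRestrictedMatching_empty : IsUniquelyRestrictedMatching G ∅ := by
  refine ⟨⟨Set.empty_subset _, by simp⟩, fun N hN => ?_⟩
  refine Set.eq_empty_of_forall_notMem fun e he => ?_
  induction e with
  | h a b => simpa using hN.2.1 _ he a (Sym2.mem_mk_left a b)

/-- `q` can only be matched to `p`, so `s(p, q)` lies in every perfect matching of the covered
vertices, and the rest of such a matching is a perfect matching of `cov M`. -/
theorem IsUniquelyRestrictedMatching.insert (hM : IsUniquelyRestrictedMatching G M)
    (hpq : G.Adj p q) (hp : p ∉ cov M) (hqM : ∀ w ∈ cov M, ¬ G.Adj q w) :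
    IsUniquelyRestrictedMatching G (insert s(p, q) M) := by
  have hq : q ∉ cov M := fun ⟨f, hf, hqf⟩ => by
    obtain ⟨w, rfl⟩ := Sym2.mem_iff_exists.1 hqf
    exact hqM w ⟨_, hf, by simp⟩ (hM.1.1 hf)
  refine ⟨⟨Set.insert_subset_iff.2 ⟨hpq, hM.1.1⟩, ?_⟩, fun N hN => ?_⟩
  · have hfresh : ∀ f ∈ M, ∀ v ∈ f, v ≠ p ∧ v ≠ q := fun f hf v hv =>
      ⟨fun h => hp (h ▸ ⟨f, hf, hv⟩), fun h => hq (h ▸ ⟨f, hf, hv⟩)⟩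
    rintro e (rfl | he) f (rfl | hf) hne v hve hvf
    · exact hne rfl
    · exact (Sym2.mem_iff.1 hve).elim (hfresh f hf v hvf).1 (hfresh f hf v hvf).2
    · exact (Sym2.mem_iff.1 hvf).elim (hfresh e he v hve).1 (hfresh e he v hve).2
    · exact hM.1.2 e he f hf hne v hve hvf
  obtain ⟨hNm, hNS, hNcov⟩ := hN
  rw [cov_insert] at hNS hNcov
  have hpqN : s(p, q) ∈ N := by
    obtain ⟨f, hf, hqf⟩ := mem_cov.1 (hNcov ▸ by simp : q ∈ cov N)
    obtain ⟨w, rfl⟩ := Sym2.mem_iff_exists.1 hqf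
    obtain rfl | rfl | hw := hNS _ hf w (by simp)
    · rwa [Sym2.eq_swap]
    · exact absurd (hNm.1 hf) G.irrefl
    · exact absurd (hNm.1 hf) (hqM w hw)
  have hrest : IsPerfectMatchingOn G (cov M) (N \ {s(p, q)}) := by
    refine ⟨hNm.mono Set.sdiff_subset, fun e ⟨he, hne⟩ v hv => ?_, ?_⟩
    · obtain ⟨hvp, hvq⟩ := hNm.ne_and_ne_of_mem_of_ne hpqN he hne hv
      simpa [hvp, hvq] using hNS e he v hv
    ext v
    refine ⟨fun ⟨e, ⟨he, hne⟩, hv⟩ => ?_, fun hv => ?_⟩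
    · obtain ⟨hvp, hvq⟩ := hNm.ne_and_ne_of_mem_of_ne hpqN he hne hv
      simpa [hvp, hvq] using hNS e he v hv
    · obtain ⟨e, he, hve⟩ := mem_cov.1 (hNcov ▸ by simp [hv] : v ∈ cov N)
      refine ⟨e, ⟨he, fun h => ?_⟩, hve⟩
      subst h
      obtain rfl | rfl := Sym2.mem_iff.1 hve
      exacts [hp hv, hq hv]
  rw [← hM.2 _ hrest, Set.insert_sdiff_singleton, Set.insert_eq_of_mem hpqN]

theorem isUniquelyRestrictedMatching_singleton (he : e ∈ G.edgeSet) :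
    IsUniquelyRestrictedMatching G {e} := by
  induction e with
  | h p q => simpa using isUniquelyRestrictedMatching_empty.insert he (by simp) (by simp)

/-- A perfect matching `N` of the vertices covered by `M' ⊆ M` extends by `M \ M'` to one of
the vertices covered by `M`. -/
theorem IsUniquelyRestrictedMatching.mono (hM : IsUniquelyRestrictedMatching G M) (h : M' ⊆ M) :
    IsUniquelyRestrictedMatching G M' := by
  refine ⟨hM.1.mono h, fun N hN => ?_⟩
  obtain ⟨hNm, hNS, hNcov⟩ := hN
  have hext : IsPerfectMatchingOn G (cov M) (N ∪ (M \ M')) := by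
    refine ⟨⟨Set.union_subset hNm.1 (Set.sdiff_subset.trans hM.1.1), ?_⟩, ?_, ?_⟩
    · have hcross : ∀ e ∈ N, ∀ f ∈ M \ M', ∀ v, v ∈ e → v ∉ f := by
        rintro e he f ⟨hf, hfM'⟩ v hve hvf
        obtain ⟨g, hg, hvg⟩ := mem_cov.1 (hNS e he v hve)
        exact hfM' (hM.1.eq_of_mem_of_mem (h hg) hf hvg hvf ▸ hg)
      rintro e (he | he) f (hf | hf) hne v hve hvf
      · exact hNm.2 e he f hf hne v hve hvf
      · exact hcross e he f hf v hve hvf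
      · exact hcross f hf e he v hvf hve
      · exact hM.1.2 e he.1 f hf.1 hne v hve hvf
    · rintro e (he | he) v hv
      exacts [cov_mono h (hNS e he v hv), ⟨e, he.1, hv⟩]
    · rw [cov_union, hNcov, ← cov_union, Set.union_sdiff_cancel h]
  have hNM : N ⊆ M := fun e he => hM.2 _ hext ▸ Or.inl he
  ext e
  induction e with
  | h a b =>
    refine ⟨fun he => ?_, fun he => ?_⟩
    · obtain ⟨f, hf, haf⟩ := mem_cov.1 (hNS _ he a (by simp))
      exact hM.1.eq_of_mem_of_mem (hNM he) (h hf) (by simp) haf ▸ hf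
    · obtain ⟨f, hf, haf⟩ := mem_cov.1 (hNcov ▸ ⟨_, he, by simp⟩ : a ∈ cov N)
      exact hM.1.eq_of_mem_of_mem (hNM hf) (h he) haf (by simp) ▸ hf

/-- Otherwise `s(q, r)` and `s(t, p)` would form a second perfect matching of `{p, q, r, t}`,
which `{s(p, q), s(r, t)}` forbids by `mono`. -/
theorem IsUniquelyRestrictedMatching.eq_of_adj_of_adj (hM : IsUniquelyRestrictedMatching G M)
    (he : s(p, q) ∈ M) (hf : s(r, t) ∈ M) (hqr : G.Adj q r) (htp : G.Adj t p) :
    s(p, q) = s(r, t) := by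
  by_contra hne
  have hpq := (hM.1.1 he).ne
  have hrt := (hM.1.1 hf).ne
  have hpr : p ≠ r := by
    rintro rfl; exact hne (hM.1.eq_of_mem_of_mem (v := p) he hf (by simp) (by simp))
  have hqt : q ≠ t := by
    rintro rfl; exact hne (hM.1.eq_of_mem_of_mem (v := q) he hf (by simp) (by simp))
  have hsub : {s(p, q), s(r, t)} ⊆ M := Set.insert_subset_iff.2 ⟨he, by simpa⟩
  have hswap : IsPerfectMatchingOn G (cov {s(p, q), s(r, t)}) {s(q, r), s(t, p)} := by
    refine ⟨⟨by simp [Set.insert_subset_iff, hqr, htp], ?_⟩, ?_, ?_⟩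
    · simp only [Set.mem_insert_iff, Set.mem_singleton_iff]
      rintro e (rfl | rfl) f (rfl | rfl) hne v hve hvf <;> grind [hqr.ne, htp.ne]
    · simp only [Set.mem_insert_iff, Set.mem_singleton_iff, cov_insert, cov_singleton]
      rintro e (rfl | rfl) v hv <;> grind
    · ext v
      simp only [cov_insert, cov_singleton, Set.mem_insert_iff, Set.mem_singleton_iff]
      grind
  have hqrM : s(q, r) ∈ ({s(p, q), s(r, t)} : Set (Sym2 V)) :=
    (hM.mono hsub).2 _ hswap ▸ Set.mem_insert _ _
  simp only [Set.mem_insert_iff, Set.mem_singleton_iff, Sym2.eq_iff] at hqrM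
  grind [hqr.ne]

end UniquelyRestricted

section Coloring

variable {G : SimpleGraph V} {P : SimpleGraph V → Set (Sym2 V) → Prop} {c : Sym2 V → ℕ}
  {k : ℕ}

theorem pIndex_eq_of_isPColoring (hc : IsPColoring G P c k)
    (hmin : ∀ c' k', IsPColoring G P c' k' → k ≤ k') : pIndex G P = k :=
  le_antisymm (Nat.sInf_le ⟨c, hc⟩)
    (le_csInf ⟨k, c, hc⟩ fun _ ⟨c', hc'⟩ => hmin c' _ hc')

theorem IsPColoring.card_le {ι : Type*} [Fintype ι]
    (hc : IsPColoring G IsUniquelyRestrictedMatching c k) (f : ι → Sym2 V)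
    (hf : ∀ x, f x ∈ G.edgeSet)
    (hsep : ∀ M, IsUniquelyRestrictedMatching G M → ∀ x y, f x ∈ M → f y ∈ M → x = y) :
    Fintype.card ι ≤ k := by
  have hinj : Function.Injective fun x => (⟨c (f x), hc.1 _ (hf x)⟩ : Fin k) := fun x y hxy =>
    hsep _ (hc.2 (c (f x))) x y ⟨hf x, rfl⟩ ⟨hf y, (Fin.val_eq_of_eq hxy).symm⟩
  simpa using Fintype.card_le_of_injective _ hinj

theorem exists_isPColoring_of_cover {ι : Type*} [Fintype ι] (M : ι → Set (Sym2 V))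
    (hM : ∀ i, IsUniquelyRestrictedMatching G (M i))
    (hcover : ∀ e ∈ G.edgeSet, ∃ i, e ∈ M i) :
    ∃ c, IsPColoring G IsUniquelyRestrictedMatching c (Fintype.card ι) := by
  classical
  let c : Sym2 V → ℕ := fun e =>
    if h : ∃ i, e ∈ M i then Fintype.equivFin ι h.choose else 0
  have hc : ∀ e ∈ G.edgeSet, ∃ i, e ∈ M i ∧ c e = Fintype.equivFin ι i := fun e he =>
    have h := hcover e he
    ⟨h.choose, h.choose_spec, dif_pos h⟩
  refine ⟨c, fun e he => ?_, fun m => ?_⟩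
  · obtain ⟨i, -, hi⟩ := hc e he
    exact hi ▸ (Fintype.equivFin ι i).isLt
  by_cases hm : ∃ i, (Fintype.equivFin ι i : ℕ) = m
  · obtain ⟨i, rfl⟩ := hm
    refine (hM i).mono fun e ⟨he, hce⟩ => ?_
    obtain ⟨j, hj, hcj⟩ := hc e he
    rwa [(Fintype.equivFin ι).injective (Fin.ext (hcj.symm.trans hce))] at hj
  · convert isUniquelyRestrictedMatching_empty (G := G)
    refine Set.eq_empty_of_forall_notMem fun e ⟨he, hce⟩ => hm ?_
    obtain ⟨j, -, hcj⟩ := hc e he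
    exact ⟨j, hcj ▸ hce⟩

end Coloring

section JoinCI

open Fin.CommRing

variable {n : ℕ}

theorem Fin.natCast_ne_zero_of_lt {N k : ℕ} [NeZero N] (hk : 0 < k) (hkN : k < N) :
    (k : Fin N) ≠ 0 := by
  rw [Ne, Fin.natCast_eq_zero]
  exact fun h => absurd (Nat.le_of_dvd hk h) (by omega)

theorem cycleGraph_adj_add_one (j : Fin (n + 2)) : (cycleGraph (n + 2)).Adj j (j + 1) :=
  cycleGraph_adj.2 (.inr (add_sub_cancel_left j 1))

@[simp] theorem joinCI_adj_inl_inl {a b : Fin n} :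
    (joinCI n).Adj (.inl a) (.inl b) ↔ (cycleGraph n).Adj a b := by
  simp only [joinCI, fromRel_adj, ne_eq, Sum.inl.injEq]
  exact ⟨fun ⟨_, h⟩ => h.elim id Adj.symm, fun h => ⟨h.ne, .inl h⟩⟩

@[simp] theorem joinCI_adj_inl_inr {a : Fin n} {u : Fin 2} :
    (joinCI n).Adj (.inl a) (.inr u) := by
  simp [joinCI]

@[simp] theorem joinCI_adj_inr_inl {a : Fin n} {u : Fin 2} :
    (joinCI n).Adj (.inr u) (.inl a) :=
  joinCI_adj_inl_inr.symm

@[simp] theorem not_joinCI_adj_inr_inr {u v : Fin 2} : ¬ (joinCI n).Adj (.inr u) (.inr v) := by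
  simp [joinCI]

def spoke (u : Fin 2) (a : Fin n) : Sym2 (Fin n ⊕ Fin 2) := s(.inr u, .inl a)

def rim (j : Fin (n + 2)) : Sym2 (Fin (n + 2) ⊕ Fin 2) := s(.inl j, .inl (j + 1))

theorem spoke_mem_edgeSet (u : Fin 2) (a : Fin n) : spoke u a ∈ (joinCI n).edgeSet := by
  simp [spoke]

theorem rim_mem_edgeSet (j : Fin (n + 2)) : rim j ∈ (joinCI (n + 2)).edgeSet := by
  simpa [rim] using cycleGraph_adj_add_one j

theorem spoke_ne_rim (u : Fin 2) (a j : Fin (n + 2)) : spoke u a ≠ rim j := by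
  simp [spoke, rim]

theorem rim_injective :
    Function.Injective (rim : Fin (n + 3) → Sym2 (Fin (n + 3) ⊕ Fin 2)) := by
  intro j j' h
  simp only [rim, Sym2.eq_iff, Sum.inl.injEq] at h
  refine h.elim And.left fun ⟨h₁, h₂⟩ => absurd ?_ (Fin.natCast_ne_zero_of_lt (N := n + 3)
    (k := 2) (by omega) (by omega))
  linear_combination h₂ - h₁

theorem spoke_or_rim_of_mem_edgeSet {e : Sym2 (Fin (n + 2) ⊕ Fin 2)}
    (he : e ∈ (joinCI (n + 2)).edgeSet) : (∃ u a, e = spoke u a) ∨ ∃ j, e = rim j := by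
  induction e with
  | h x y =>
    rcases x with a | u <;> rcases y with b | v
    · obtain h | h := cycleGraph_adj.1 (joinCI_adj_inl_inl.1 he)
      · exact .inr ⟨b, by rw [rim, ← h, add_sub_cancel, Sym2.eq_swap]⟩
      · exact .inr ⟨a, by rw [rim, ← h, add_sub_cancel]⟩
    · exact .inl ⟨v, a, Sym2.eq_swap⟩
    · exact .inl ⟨u, b, rfl⟩
    · exact absurd he not_joinCI_adj_inr_inr

theorem IsUniquelyRestrictedMatching.eq_of_spoke_mem_of_spoke_mem
    {M : Set (Sym2 (Fin n ⊕ Fin 2))} (hM : IsUniquelyRestrictedMatching (joinCI n) M)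
    {u u' : Fin 2} {a a' : Fin n} (h : spoke u a ∈ M) (h' : spoke u' a' ∈ M) :
    (u, a) = (u', a') := by
  simpa [spoke] using hM.eq_of_adj_of_adj h h' joinCI_adj_inl_inr joinCI_adj_inl_inr

theorem IsUniquelyRestrictedMatching.spoke_not_mem_of_rim_mem
    {M : Set (Sym2 (Fin (n + 2) ⊕ Fin 2))} (hM : IsUniquelyRestrictedMatching (joinCI (n + 2)) M)
    {j a : Fin (n + 2)} (u : Fin 2) (hj : rim j ∈ M)
    (ha : a = j - 1 ∨ a = j ∨ a = j + 1 ∨ a = j + 2) : spoke u a ∉ M := by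
  intro hu
  refine spoke_ne_rim u a j ?_
  obtain rfl | rfl | rfl | rfl := ha
  · refine hM.eq_of_adj_of_adj hu hj (joinCI_adj_inl_inl.2 ?_) joinCI_adj_inl_inr
    exact cycleGraph_adj.2 (.inr (by ring))
  · exact hM.1.eq_of_mem_of_mem (v := .inl a) hu hj (by simp [spoke]) (by simp [rim])
  · exact hM.1.eq_of_mem_of_mem (v := .inl (j + 1)) hu hj (by simp [spoke]) (by simp [rim])
  · rw [rim, Sym2.eq_swap] at hj ⊢
    refine hM.eq_of_adj_of_adj hu hj (joinCI_adj_inl_inl.2 ?_) joinCI_adj_inl_inr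
    exact cycleGraph_adj.2 (.inl (by ring))

theorem IsPColoring.two_mul_le {c : Sym2 (Fin n ⊕ Fin 2) → ℕ} {k : ℕ}
    (hc : IsPColoring (joinCI n) IsUniquelyRestrictedMatching c k) : 2 * n ≤ k := by
  simpa using hc.card_le (fun x : Fin 2 × Fin n => spoke x.1 x.2)
    (fun x => spoke_mem_edgeSet x.1 x.2) fun _ hM _ _ h h' => hM.eq_of_spoke_mem_of_spoke_mem h h'

theorem isUniquelyRestrictedMatching_spoke_rim (u : Fin 2) (j : Fin (n + 5)) :
    IsUniquelyRestrictedMatching (joinCI (n + 5)) {spoke u (j + 3), rim j} := by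
  have h0 (k : ℕ) (hk : 0 < k) (hk5 : k < 5) : (k : Fin (n + 5)) ≠ 0 :=
    Fin.natCast_ne_zero_of_lt hk (by omega)
  refine (isUniquelyRestrictedMatching_singleton (rim_mem_edgeSet j)).insert joinCI_adj_inr_inl
    (by simp [rim]) ?_
  simp only [rim, cov_singleton, Set.forall_mem_insert, Set.mem_singleton_iff, forall_eq,
    joinCI_adj_inl_inl, cycleGraph_adj, not_or]
  exact ⟨⟨fun h => h0 2 (by omega) (by omega) (by linear_combination h),
    fun h => h0 4 (by omega) (by omega) (by linear_combination -h)⟩,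
    ⟨fun h => h0 1 (by omega) (by omega) (by linear_combination h),
    fun h => h0 3 (by omega) (by omega) (by linear_combination -h)⟩⟩

theorem urIndex_joinCI_add_five : urIndex (joinCI (n + 5)) = 2 * (n + 5) := by
  let M : Fin (n + 5) ⊕ Fin (n + 5) → Set (Sym2 (Fin (n + 5) ⊕ Fin 2)) :=
    Sum.elim (fun j => {spoke 0 (j + 3), rim j}) fun a => {spoke 1 a}
  have hM : ∀ i, IsUniquelyRestrictedMatching (joinCI (n + 5)) (M i) :=
    Sum.rec (isUniquelyRestrictedMatching_spoke_rim 0) fun a =>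
      isUniquelyRestrictedMatching_singleton (spoke_mem_edgeSet 1 a)
  have hcover : ∀ e ∈ (joinCI (n + 5)).edgeSet, ∃ i, e ∈ M i := by
    intro e he
    obtain ⟨u, a, rfl⟩ | ⟨j, rfl⟩ := spoke_or_rim_of_mem_edgeSet he
    · match u with
      | 0 => exact ⟨.inl (a - 3), .inl (by rw [sub_add_cancel])⟩
      | 1 => exact ⟨.inr a, rfl⟩
    · exact ⟨.inl j, .inr rfl⟩
  obtain ⟨c, hc⟩ := exists_isPColoring_of_cover M hM hcover
  rw [Fintype.card_sum, Fintype.card_fin, ← two_mul] at hc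
  exact pIndex_eq_of_isPColoring hc fun _ _ hc' => hc'.two_mul_le

theorem Fin.four_eq_sub_one_or_eq_or_eq_add_one_or_eq_add_two (a j : Fin 4) :
    a = j - 1 ∨ a = j ∨ a = j + 1 ∨ a = j + 2 := by
  revert a j; decide

theorem IsUniquelyRestrictedMatching.eq_of_rim_mem_of_rim_mem_four
    {M : Set (Sym2 (Fin 4 ⊕ Fin 2))} (hM : IsUniquelyRestrictedMatching (joinCI 4) M)
    {j j' : Fin 4} (h : rim j ∈ M) (h' : rim j' ∈ M) : j = j' := by
  refine rim_injective ?_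
  obtain rfl | rfl | rfl | rfl := Fin.four_eq_sub_one_or_eq_or_eq_add_one_or_eq_add_two j' j
  · exact (hM.1.eq_of_mem_of_mem (v := .inl j) h' h (by simp [rim]) (by simp [rim])).symm
  · rfl
  · exact hM.1.eq_of_mem_of_mem (v := .inl (j + 1)) h h' (by simp [rim]) (by simp [rim])
  · have hadj : ∀ j : Fin 4, (cycleGraph 4).Adj (j + 2 + 1) j := by decide
    exact hM.eq_of_adj_of_adj h h' (joinCI_adj_inl_inl.2 (cycleGraph_adj.2 (.inr (by ring))))
      (joinCI_adj_inl_inl.2 (hadj j))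

theorem urIndex_joinCI_four : urIndex (joinCI 4) = 12 := by
  let edge : Fin 2 × Fin 4 ⊕ Fin 4 → Sym2 (Fin 4 ⊕ Fin 2) :=
    Sum.elim (fun x => spoke x.1 x.2) rim
  have hedge : ∀ x, edge x ∈ (joinCI 4).edgeSet :=
    Sum.rec (fun x => spoke_mem_edgeSet x.1 x.2) rim_mem_edgeSet
  have hsep (M) (hM : IsUniquelyRestrictedMatching (joinCI 4) M) (x y) (h : edge x ∈ M)
      (h' : edge y ∈ M) : x = y := by
    rcases x with ⟨u, a⟩ | j <;> rcases y with ⟨u', a'⟩ | j'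
    · exact congrArg Sum.inl (hM.eq_of_spoke_mem_of_spoke_mem h h')
    · exact absurd h (hM.spoke_not_mem_of_rim_mem u h'
        (Fin.four_eq_sub_one_or_eq_or_eq_add_one_or_eq_add_two a j'))
    · exact absurd h' (hM.spoke_not_mem_of_rim_mem u' h
        (Fin.four_eq_sub_one_or_eq_or_eq_add_one_or_eq_add_two a' j))
    · exact congrArg Sum.inr (hM.eq_of_rim_mem_of_rim_mem_four h h')
  have hcover (e) (he : e ∈ (joinCI 4).edgeSet) : ∃ x, e ∈ ({edge x} : Set _) := by
    obtain ⟨u, a, rfl⟩ | ⟨j, rfl⟩ := spoke_or_rim_of_mem_edgeSet he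
    exacts [⟨.inl (u, a), rfl⟩, ⟨.inr j, rfl⟩]
  obtain ⟨c, hc⟩ := exists_isPColoring_of_cover _
    (fun x => isUniquelyRestrictedMatching_singleton (hedge x)) hcover
  exact pIndex_eq_of_isPColoring hc fun _ _ hc' => hc'.card_le edge hedge hsep

end JoinCI

/-- For `Δ ≥ 5`, `χ'_ur(C_Δ ∨ I_2) = 2Δ`, while `χ'_ur(C_4 ∨ I_2) = 12 = 2·4+4`. -/
theorem urIndex_joinCI :
    (∀ Δ : ℕ, 5 ≤ Δ → urIndex (joinCI Δ) = 2 * Δ) ∧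
    urIndex (joinCI 4) = 12 := by
  refine ⟨fun Δ hΔ => ?_, urIndex_joinCI_four⟩
  obtain ⟨n, rfl⟩ := Nat.exists_eq_add_of_le' hΔ
  exact urIndex_joinCI_add_five

end SSE
end
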